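/- Let G = C_{n_1} × ... × C_{n_k} with 1 < n_1 | n_2 | ... | n_k and k ≥ 2, with generators a_1, ..., a_k. Define H_k = ⟨a_1, ..., a_{k−1}⟩ and, for 1 ≤ i ≤ k−1, H_i = ⟨a_1, ..., a_{i−1}, a_i a_k^{n_k/n_i}, a_{i+1}, ..., a_{k−1}⟩. Then ∩_{i=1}^k H_i = 1. -/

import Mathlib

/-- The abelian group with invariant factors `n 0 ∣ n 1 ∣ ... ∣ n (k-1)`. -/
abbrev IG (k : ℕ) (n : Fin k → ℕ) := ∀ i : Fin k, Multiplicative (ZMod (n i))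

/-- The canonical generator of the `i`-th cyclic factor. -/
abbrev gen (k : ℕ) (n : Fin k → ℕ) (i : Fin k) : IG k n :=
  Pi.mulSingle i (Multiplicative.ofAdd (1 : ZMod (n i)))

/-!
Every generator of `H_k` has trivial last coordinate, so an element `x` of the intersection has
`x_k = 1`. For `i < k`, the map `ι_i : ℤ/n_i → ℤ/n_k`, `1 ↦ n_k / n_i`, is an injective
homomorphism, and every generator of `H_i` satisfies `y_k = ι_i(y_i)`; hence so does `x`, and
`ι_i(x_i) = x_k = 1` forces `x_i = 1`.
-/

namespace ZMod

variable {a b : ℕ}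

def scaleHom (h : a ∣ b) : ZMod a →+ ZMod b :=
  lift a ⟨zmultiplesHom _ ((b / a : ℕ) : ZMod b), by
    simp [← Nat.cast_mul, Nat.mul_div_cancel' h]⟩

lemma scaleHom_one (h : a ∣ b) : scaleHom h 1 = ((b / a : ℕ) : ZMod b) := by
  rw [← Int.cast_one, scaleHom, lift_coe]
  simp

lemma scaleHom_injective (h : a ∣ b) (hb : b ≠ 0) : Function.Injective (scaleHom h) := by
  obtain ⟨d, rfl⟩ := h
  have hd : (d : ℤ) ≠ 0 := Int.natCast_ne_zero.2 (right_ne_zero_of_mul hb)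
  have ha : 0 < a := Nat.pos_of_ne_zero (left_ne_zero_of_mul hb)
  refine (lift_injective _).2 fun m hm => ?_
  rw [zmultiplesHom_apply, Nat.mul_div_cancel_left d ha, ← Int.cast_natCast, zsmul_eq_mul,
    ← Int.cast_mul, intCast_zmod_eq_zero_iff_dvd, Nat.cast_mul] at hm
  rw [intCast_zmod_eq_zero_iff_dvd]
  exact (mul_dvd_mul_iff_right hd).1 hm

end ZMod

section

variable {k : ℕ} {n : Fin k → ℕ}

def graphDefectHom (i m : Fin k) (h : n i ∣ n m) : IG k n →* Multiplicative (ZMod (n m)) :=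
  MonoidHom.mk' (fun y => .ofAdd (ZMod.scaleHom h (y i).toAdd - (y m).toAdd)) fun y z => by
    simp only [Pi.mul_apply, toAdd_mul, map_add, ← ofAdd_add]
    abel_nf

lemma closure_gen_le_ker_eval {S : Set (Fin k)} {m : Fin k} (hm : m ∉ S) :
    Subgroup.closure (gen k n '' S) ≤ (Pi.evalMonoidHom _ m).ker := by
  rw [Subgroup.closure_le]
  rintro _ ⟨j, hj, rfl⟩
  exact Pi.mulSingle_eq_of_ne (ne_of_mem_of_not_mem hj hm).symm _

lemma closure_twisted_gen_le_ker_graphDefectHom {S : Set (Fin k)} {i m : Fin k} (hm : m ∉ S)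
    (him : i ≠ m) (h : n i ∣ n m) :
    Subgroup.closure ((fun j => if j = i then gen k n i * gen k n m ^ (n m / n i)
      else gen k n j) '' S) ≤ (graphDefectHom i m h).ker := by
  rw [Subgroup.closure_le]
  rintro _ ⟨j, hj, rfl⟩
  have hjm : j ≠ m := ne_of_mem_of_not_mem hj hm
  by_cases hji : j = i
  · simp [hji, graphDefectHom, Pi.mulSingle_eq_of_ne him, Pi.mulSingle_eq_of_ne him.symm,
      ZMod.scaleHom_one, ← ofAdd_nsmul]
  · simp [hji, graphDefectHom, Pi.mulSingle_eq_of_ne hjm.symm]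

end

theorem stmt_11 (k : ℕ) (hk : 2 ≤ k) (n : Fin k → ℕ)
    (h1 : ∀ i, 1 < n i) (hdvd : ∀ i j : Fin k, i ≤ j → n i ∣ n j) :
    (⨅ i : Fin k,
      if (i : ℕ) < k - 1 then
        Subgroup.closure
          ((fun j : Fin k => if j = i then
              gen k n i * gen k n ⟨k - 1, by omega⟩ ^ (n ⟨k - 1, by omega⟩ / n i)
            else gen k n j) '' {j : Fin k | (j : ℕ) < k - 1})
      else
        Subgroup.closure (gen k n '' {j : Fin k | (j : ℕ) < k - 1})) = ⊥ := by
  set m : Fin k := ⟨k - 1, by omega⟩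
  have hmS : m ∉ {j : Fin k | (j : ℕ) < k - 1} := lt_irrefl (k - 1)
  rw [eq_bot_iff]
  intro x hx
  rw [Subgroup.mem_iInf] at hx
  have hxm : x m = 1 := by
    simpa using closure_gen_le_ker_eval hmS (by simpa [m] using hx m)
  have hxi (i : Fin k) (hi : (i : ℕ) < k - 1) : x i = 1 := by
    have him : i ≠ m := fun e => (e ▸ hmS) hi
    have hdvd_im := hdvd i m (Fin.mk_le_mk.2 hi.le)
    have hker :=
      closure_twisted_gen_le_ker_graphDefectHom hmS him hdvd_im (by simpa [hi] using hx i)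
    have hscale : ZMod.scaleHom hdvd_im (x i).toAdd = 0 := by
      simpa [graphDefectHom, hxm] using hker
    exact toAdd_eq_zero.1 <|
      ZMod.scaleHom_injective hdvd_im (by have := h1 m; omega) (hscale.trans (map_zero _).symm)
  funext j
  rcases lt_or_ge (j : ℕ) (k - 1) with hj | hj
  · exact hxi j hj
  · obtain rfl : j = m := Fin.ext (by simp [m]; omega)
    exact hxm
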